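/- arXiv:2002.11793 — 5 statements merged into one kernel-verified Lean document; each statement's English description precedes it below -/
import Mathlib

section
/- Let n be divisible by 4 and let G be the graph on vertex set V = V₁ ∪ V₂ with |V₁| = n/4, |V₂| = 3n/4, whose edges are all pairs of vertices except the pairs with both endpoints in V₁ (i.e., G = Kₙ minus a clique on n/4 vertices). Define f : E(G) → {−1, +1} by f(e) = −1 if e has an endpoint in V₁ and f(e) = +1 otherwise. Then every Hamilton cycle H of G satisfies f(H) = 0. Consequently the minimum degree bound (3/4 + c)n in the linear Hamilton-cycle discrepancy theorem cannot be lowered to 3n/4. -/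
/-!
Write `w v = -3` for `v ∈ V₁` and `w v = 1` otherwise. Since no edge lies inside `V₁`, every
edge `ab` has `2 f(ab) = w a + w b`. Summing along a closed walk counts every vertex visit
twice, and a Hamilton cycle visits each vertex once, so `2 f(H) = 2 ∑_v w v
= 2 (-3 · n/4 + 3n/4) = 0`.
-/

open SimpleGraph Finset

/-- The extremal graph: `K_n` minus a clique on the first `n/4 = m` vertices
(vertex set `Fin (4m)`, first `m` vertices form the independent set `V₁`). -/
def extremalGraph (m : ℕ) : SimpleGraph (Fin (4 * m)) :=
  SimpleGraph.fromRel (fun a b => ¬(a.val < m ∧ b.val < m))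

/-- The labeling: `-1` on every edge having an endpoint in `V₁`, `+1` otherwise. -/
def extremalLabel (m : ℕ) : Sym2 (Fin (4 * m)) → ℤ :=
  fun e => if ∃ v ∈ e, (v : Fin (4 * m)).val < m then -1 else 1

namespace SimpleGraph.Walk

variable {V M : Type*} {G : SimpleGraph V}

section EdgeSums

variable [AddCommMonoid M] {φ : Sym2 V → M} {g : V → M}

theorem sum_map_edges_add_of_adj_eq (hφ : ∀ a b, G.Adj a b → φ s(a, b) = g a + g b)
    {u w : V} (p : G.Walk u w) :
    (p.edges.map φ).sum + g w = g u + 2 • (p.support.tail.map g).sum := by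
  induction p with
  | nil => simp
  | cons hadj q ih =>
    rename_i a b _
    rw [edges_cons, List.map_cons, List.sum_cons, add_assoc, ih, hφ a b hadj, support_cons,
      List.tail_cons, ← q.cons_tail_support, List.map_cons, List.sum_cons]
    abel

theorem sum_map_edges_of_adj_eq [IsRightCancelAdd M]
    (hφ : ∀ a b, G.Adj a b → φ s(a, b) = g a + g b) {u : V} (p : G.Walk u u) :
    (p.edges.map φ).sum = 2 • (p.support.tail.map g).sum :=
  add_right_cancel <| (p.sum_map_edges_add_of_adj_eq hφ).trans (add_comm _ _)

end EdgeSums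

theorem IsHamiltonian.sum_map_support [Fintype V] [DecidableEq V] [AddCommMonoid M]
    {u w : V} {p : G.Walk u w} (hp : p.IsHamiltonian) (g : V → M) :
    (p.support.map g).sum = ∑ v, g v := by
  rw [← List.sum_toFinset g hp.isPath.support_nodup, hp.toFinset_support]

theorem IsHamiltonianCycle.sum_map_support_tail [Fintype V] [DecidableEq V] [AddCommMonoid M]
    {u : V} {p : G.Walk u u} (hp : p.IsHamiltonianCycle) (g : V → M) :
    (p.support.tail.map g).sum = ∑ v, g v := by
  rw [← support_tail_of_not_nil p hp.not_nil]
  exact hp.isHamiltonian_tail.sum_map_support g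

end SimpleGraph.Walk

def extremalWeight (m : ℕ) (v : Fin (4 * m)) : ℤ :=
  if v.val < m then -3 else 1

theorem two_mul_extremalLabel {m : ℕ} {a b : Fin (4 * m)} (hab : (extremalGraph m).Adj a b) :
    2 * extremalLabel m s(a, b) = extremalWeight m a + extremalWeight m b := by
  have hnot : ¬(a.val < m ∧ b.val < m) := by
    simpa [extremalGraph, and_comm] using hab.2
  simp only [extremalLabel, extremalWeight, Sym2.mem_iff]
  by_cases ha : a.val < m <;> by_cases hb : b.val < m <;> simp [ha, hb] at hnot ⊢

theorem sum_extremalWeight (m : ℕ) : ∑ v, extremalWeight m v = 0 := by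
  have hV₁ : #{v : Fin (4 * m) | v.val < m} = m := by
    rw [Fin.card_filter_val_lt]
    omega
  have hV₂ : #{v : Fin (4 * m) | ¬v.val < m} = 3 * m := by
    rw [filter_not, card_sdiff_of_subset (filter_subset _ _), hV₁, card_univ, Fintype.card_fin]
    omega
  simp only [extremalWeight, sum_ite, sum_const, hV₁, hV₂, nsmul_eq_mul]
  push_cast
  ring

theorem extremal_hamilton_zero_discrepancy_general (m : ℕ) (v : Fin (4 * m))
    (H : (extremalGraph m).Walk v v) (hH : H.IsHamiltonianCycle) :
    (H.edges.map (extremalLabel m)).sum = 0 := by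
  have hdouble : 2 * (H.edges.map (extremalLabel m)).sum = 0 := by
    rw [← List.sum_map_mul_left,
      H.sum_map_edges_of_adj_eq (g := extremalWeight m) fun _ _ ↦ two_mul_extremalLabel,
      hH.sum_map_support_tail, sum_extremalWeight, smul_zero]
  omega

/-- For `n = 4m` divisible by 4, in the graph `Kₙ` minus a clique on `n/4`
vertices, with the labeling `-1` on edges touching `V₁` and `+1` elsewhere, every Hamilton
cycle has label-sum `0`. -/
theorem extremal_hamilton_zero_discrepancy (m : ℕ) (hm : 0 < m) (v : Fin (4 * m))
    (H : (extremalGraph m).Walk v v) (hH : H.IsHamiltonianCycle) :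
    (H.edges.map (extremalLabel m)).sum = 0 :=
  extremal_hamilton_zero_discrepancy_general m v H hH
end

section
/- Let G be a connected graph on n vertices and let C be a vertex cut of G, that is, V(G) = A ∪ B ∪ C is a partition such that there are no edges between A and B; suppose |A| ≤ |B|. Then the spanning tree discrepancy satisfies 𝒟(G, 𝒯ₙ) ≤ |B| − |A| + |C|. -/
/-!
Label an edge `+1` if both its ends lie in `B ∪ C` and `-1` otherwise. Of the `n - 1` edges of a
spanning tree, those inside `B ∪ C` form a forest on `B ∪ C`, so there are at most `|B| + |C| - 1`
of them. Every other edge meets `A`, hence, as there are no `A`–`B` edges, lies inside `A ∪ C`;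
these form a forest on `A ∪ C`, so there are at most `|A| + |C| - 1 ≤ |B| + |C| - 1` of them.
The two counts pin the label sum between `-(|B| - |A| + |C|)` and `|B| - |A| + |C|`.
-/

open SimpleGraph Finset

/-- The sum of the labels `f` over a set `E` of edges (of a finite vertex type). -/
noncomputable def edgeLabelSum {V : Type*} [Fintype V] [DecidableEq V]
    (f : Sym2 V → ℤ) (E : Set (Sym2 V)) : ℤ :=
  ∑ e : Sym2 V, E.indicator f e

namespace SimpleGraph

variable {V : Type*} [Fintype V] {G : SimpleGraph V}

theorem IsAcyclic.card_edgeFinset_lt [Nonempty V] [Fintype G.edgeSet] (hG : G.IsAcyclic) :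
    #G.edgeFinset < Fintype.card V := by
  classical
  obtain ⟨T, hGT, -, hT⟩ := connected_top.exists_isTree_le_of_le_of_isAcyclic le_top hG
  calc #G.edgeFinset ≤ #T.edgeFinset := card_le_card (edgeFinset_mono hGT)
    _ < Fintype.card V := by have := hT.card_edgeFinset; omega

theorem IsAcyclic.card_edgeFinset_inter_sym2_le [DecidableEq V] [DecidableRel G.Adj]
    (hG : G.IsAcyclic) (U : Finset V) : #(G.edgeFinset ∩ U.sym2) ≤ #U - 1 := by
  rcases U.eq_empty_or_nonempty with rfl | ⟨u, hu⟩
  · simp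
  have : Nonempty (U : Set V) := ⟨⟨u, hu⟩⟩
  have hmap := congrArg card (G.map_edgeFinset_induce (s := (U : Set V)))
  rw [card_map, Finset.toFinset_coe] at hmap
  have hlt : #(G.edgeFinset ∩ U.sym2) < #U :=
    calc #(G.edgeFinset ∩ U.sym2) = #(G.induce (U : Set V)).edgeFinset := by convert hmap.symm
      _ < Fintype.card (U : Set V) := (hG.induce _).card_edgeFinset_lt
      _ = #U := by simp
  omega

theorem edgeSet_subset_sym2_union_sym2 [DecidableEq V] {A B C : Finset V}
    (hcover : A ∪ B ∪ C = univ) (hnoedge : ∀ a ∈ A, ∀ b ∈ B, ¬G.Adj a b) :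
    G.edgeSet ⊆ ((B ∪ C).sym2 : Set (Sym2 V)) ∪ (A ∪ C).sym2 := by
  intro e he
  induction e using Sym2.ind with
  | h x y =>
  have hx : x ∈ A ∪ B ∪ C := hcover ▸ mem_univ x
  have hy : y ∈ A ∪ B ∪ C := hcover ▸ mem_univ y
  simp only [Set.mem_union, mem_coe, mk_mem_sym2_iff, mem_union] at hx hy ⊢
  grind [mem_edgeSet, Adj.symm]

end SimpleGraph

theorem edgeLabelSum_eq_sum_toFinset {V : Type*} [Fintype V] [DecidableEq V] (f : Sym2 V → ℤ)
    (E : Set (Sym2 V)) [Fintype E] : edgeLabelSum f E = ∑ e ∈ E.toFinset, f e := by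
  rw [edgeLabelSum, ← sum_indicator_subset f (subset_univ E.toFinset), Set.coe_toFinset]

def insideLabel {V : Type*} [DecidableEq V] (S : Finset V) (e : Sym2 V) : ℤ :=
  if e ∈ S.sym2 then 1 else -1

theorem sum_insideLabel {V : Type*} [DecidableEq V] (S : Finset V) (F : Finset (Sym2 V)) :
    ∑ e ∈ F, insideLabel S e = #(F ∩ S.sym2) - #(F \ S.sym2) := by
  simp [insideLabel, sum_ite, filter_mem_eq_inter, filter_notMem_eq_sdiff, sub_eq_add_neg]

theorem spanning_tree_discrepancy_cut_general {V : Type*} [Fintype V] [DecidableEq V]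
    (G : SimpleGraph V)
    (A B C : Finset V)
    (hAB : Disjoint A B) (hAC : Disjoint A C) (hBC : Disjoint B C)
    (hcover : A ∪ B ∪ C = univ)
    (hnoedge : ∀ a ∈ A, ∀ b ∈ B, ¬G.Adj a b)
    (hcard : A.card ≤ B.card) :
    ∃ f : Sym2 V → ℤ,
      (∀ e ∈ G.edgeSet, f e = 1 ∨ f e = -1) ∧
      ∀ T : SimpleGraph V, T ≤ G → T.IsTree →
        |edgeLabelSum f T.edgeSet| ≤ (B.card : ℤ) - A.card + C.card := by
  classical
  refine ⟨insideLabel (B ∪ C), fun e _ ↦ by unfold insideLabel; split_ifs <;> simp, ?_⟩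
  intro T hTG hT
  have hV : #A + #B + #C = Fintype.card V := by
    rw [← card_univ, ← hcover, card_union_of_disjoint (disjoint_union_left.mpr ⟨hAC, hBC⟩),
      card_union_of_disjoint hAB]
  have hT_card := hT.card_edgeFinset
  have hBC_card := card_union_of_disjoint hBC
  have hAC_card := card_union_of_disjoint hAC
  have h_split := card_inter_add_card_sdiff T.edgeFinset (B ∪ C).sym2
  have h_inside := hT.isAcyclic.card_edgeFinset_inter_sym2_le (B ∪ C)
  have h_outside : #(T.edgeFinset \ (B ∪ C).sym2) ≤ #(A ∪ C) - 1 := by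
    refine le_trans (card_le_card fun e he ↦ ?_) (hT.isAcyclic.card_edgeFinset_inter_sym2_le _)
    obtain ⟨heT, heBC⟩ := mem_sdiff.mp he
    refine mem_inter.mpr ⟨heT, ?_⟩
    exact (edgeSet_subset_sym2_union_sym2 hcover hnoedge
      (edgeSet_mono hTG (mem_edgeFinset.mp heT))).resolve_left heBC
  rw [edgeLabelSum_eq_sum_toFinset, ← edgeFinset, sum_insideLabel, abs_le]
  omega

/-- Let `G` be a connected graph whose vertex set is partitioned as
`A ∪ B ∪ C` with no edges between `A` and `B` (so `C` is a vertex cut), and `|A| ≤ |B|`.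
Then the spanning-tree discrepancy of `G` is at most `|B| − |A| + |C|`: there is a
`±1`-labeling `f` of the edges such that every spanning tree `T` of `G` satisfies
`|f(T)| ≤ |B| − |A| + |C|`. -/
theorem spanning_tree_discrepancy_cut {V : Type*} [Fintype V] [DecidableEq V]
    (G : SimpleGraph V) (hG : G.Connected)
    (A B C : Finset V)
    (hAB : Disjoint A B) (hAC : Disjoint A C) (hBC : Disjoint B C)
    (hcover : A ∪ B ∪ C = univ)
    (hnoedge : ∀ a ∈ A, ∀ b ∈ B, ¬G.Adj a b)
    (hcard : A.card ≤ B.card) :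
    ∃ f : Sym2 V → ℤ,
      (∀ e ∈ G.edgeSet, f e = 1 ∨ f e = -1) ∧
      ∀ T : SimpleGraph V, T ≤ G → T.IsTree →
        |edgeLabelSum f T.edgeSet| ≤ (B.card : ℤ) - A.card + C.card :=
  spanning_tree_discrepancy_cut_general G A B C hAB hAC hBC hcover hnoedge hcard
end

section
/- Let k and ℓ be positive integers. Then the (not necessarily spanning) tree discrepancy of the grid satisfies 𝒟(Pₖ □ Pₗ, 𝒯) > kℓ/8 − max{k, ℓ}/8 − min{k, ℓ}; that is, for every labeling f : E(Pₖ □ Pₗ) → {−1, +1} there exists a subtree T of Pₖ □ Pₗ with |f(T)| > kℓ/8 − max{k, ℓ}/8 − min{k, ℓ}. -/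
open SimpleGraph Finset

lemma edgeLabelSum_coe_finset {V : Type*} [Fintype V] [DecidableEq V] (f : Sym2 V → ℤ)
    (F : Finset (Sym2 V)) : edgeLabelSum f ↑F = ∑ e ∈ F, f e := by
  rw [edgeLabelSum, ← sum_subset (subset_univ F) fun e _ he => Set.indicator_of_notMem he f]
  exact sum_congr rfl fun e he => Set.indicator_of_mem he f

namespace SimpleGraph

variable {V : Type*} {G : SimpleGraph V}

structure ParentMap (G : SimpleGraph V) where
  root : V
  parent : V → V
  depth : V → ℕ
  adj_parent : ∀ v ≠ root, G.Adj v (parent v)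
  depth_parent_lt : ∀ v ≠ root, depth (parent v) < depth v

namespace ParentMap

variable (P : G.ParentMap)

def edge (v : V) : Sym2 V := s(v, P.parent v)

lemma injOn_edge : Set.InjOn P.edge {v | v ≠ P.root} := by
  intro v hv w hw hvw
  rcases Sym2.eq_iff.1 hvw with ⟨h, -⟩ | ⟨hvw, hwv⟩
  · exact h
  · have hv' := P.depth_parent_lt v hv
    have hw' := P.depth_parent_lt w hw
    rw [hwv] at hv'
    rw [← hvw] at hw'
    omega

def subtree (U : Finset V) : G.Subgraph where
  verts := U
  Adj u v := u ∈ U ∧ v ∈ U ∧ (u ≠ P.root ∧ v = P.parent u ∨ v ≠ P.root ∧ u = P.parent v)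
  adj_sub := by
    rintro u v ⟨-, -, ⟨hu, rfl⟩ | ⟨hv, rfl⟩⟩
    · exact P.adj_parent u hu
    · exact (P.adj_parent v hv).symm
  edge_vert h := h.1
  symm := ⟨fun _ _ ⟨hu, hv, h⟩ => ⟨hv, hu, h.symm⟩⟩

variable {P} {U : Finset V}

lemma edgeSet_subtree [DecidableEq V] (hU : ∀ v ∈ U, v ≠ P.root → P.parent v ∈ U) :
    (P.subtree U).edgeSet = ↑((U.erase P.root).image P.edge) := by
  ext e
  induction e using Sym2.ind with | h u v =>
  simp only [Subgraph.mem_edgeSet, subtree, coe_image, coe_erase, Set.mem_image,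
    Set.mem_sdiff, mem_coe, Set.mem_singleton_iff, edge]
  constructor
  · rintro ⟨hu, hv, ⟨hr, rfl⟩ | ⟨hr, rfl⟩⟩
    · exact ⟨u, ⟨hu, hr⟩, rfl⟩
    · exact ⟨v, ⟨hv, hr⟩, Sym2.eq_swap⟩
  · rintro ⟨w, ⟨hw, hr⟩, he⟩
    rcases Sym2.eq_iff.1 he with ⟨rfl, rfl⟩ | ⟨rfl, rfl⟩
    · exact ⟨hw, hU w hw hr, Or.inl ⟨hr, rfl⟩⟩
    · exact ⟨hU w hw hr, hw, Or.inr ⟨hr, rfl⟩⟩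

lemma subtree_connected (hr : P.root ∈ U) (hU : ∀ v ∈ U, v ≠ P.root → P.parent v ∈ U) :
    (P.subtree U).Connected := by
  rw [Subgraph.connected_iff', connected_iff_exists_forall_reachable]
  refine ⟨⟨P.root, hr⟩, ?_⟩
  rintro ⟨v, hv⟩
  induction hd : P.depth v using Nat.strong_induction_on generalizing v with | _ n ih =>
  by_cases hvr : v = P.root
  · subst hvr; rfl
  · have hp := hU v hv hvr
    refine (ih _ (hd ▸ P.depth_parent_lt v hvr) (P.parent v) hp rfl).trans ?_
    exact Adj.reachable ⟨hp, hv, Or.inr ⟨hvr, rfl⟩⟩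

theorem isTree_subtree [Finite V] (hr : P.root ∈ U)
    (hU : ∀ v ∈ U, v ≠ P.root → P.parent v ∈ U) : (P.subtree U).coe.IsTree := by
  classical
  refine isTree_iff_connected_and_card.2 ⟨(subtree_connected hr hU).coe, ?_⟩
  have hcard : Nat.card (P.subtree U).coe.edgeSet = Nat.card (P.subtree U).edgeSet := by
    rw [← Subgraph.image_coe_edgeSet_coe,
      Nat.card_image_of_injective (Sym2.map.injective Subtype.val_injective)]
  rw [hcard, edgeSet_subtree hU, Nat.card_coe_set_eq, Set.ncard_coe_finset,
    card_image_of_injOn (P.injOn_edge.mono fun v hv => (mem_erase.1 hv).1), card_erase_of_mem hr]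
  simp only [subtree, Nat.card_coe_set_eq, Set.ncard_coe_finset]
  have := card_pos.2 ⟨_, hr⟩
  omega

variable [Fintype V] [DecidableEq V]

lemma edgeLabelSum_subtree (f : Sym2 V → ℤ) {U : Finset V}
    (hU : ∀ v ∈ U, v ≠ P.root → P.parent v ∈ U) :
    edgeLabelSum f (P.subtree U).edgeSet = ∑ v ∈ U.erase P.root, f (P.edge v) := by
  rw [edgeSet_subtree hU, edgeLabelSum_coe_finset,
    sum_image (P.injOn_edge.mono fun v hv => (mem_erase.1 hv).1)]

theorem exists_isTree_card_le_two_mul_abs_edgeLabelSum {C L : Finset V} (hr : P.root ∈ C)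
    (hC : ∀ v ∈ C, v ≠ P.root → P.parent v ∈ C) (hL : ∀ v ∈ L, P.parent v ∈ C)
    (hCL : Disjoint C L) (f : Sym2 V → ℤ) (hf : ∀ e ∈ G.edgeSet, f e = 1 ∨ f e = -1) :
    ∃ H : G.Subgraph, H.coe.IsTree ∧ (#L : ℤ) ≤ 2 * |edgeLabelSum f H.edgeSet| := by
  have hLr : ∀ v ∈ L, v ≠ P.root := fun v hv hvr => Finset.disjoint_left.1 hCL (hvr ▸ hr) hv
  have hclosed : ∀ S ⊆ L, ∀ v ∈ C ∪ S, v ≠ P.root → P.parent v ∈ C ∪ S := by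
    intro S hS v hv hvr
    rcases mem_union.1 hv with hv | hv
    · exact mem_union_left _ (hC v hv hvr)
    · exact mem_union_left _ (hL v (hS hv))
  have hsum : ∀ S ⊆ L, edgeLabelSum f (P.subtree (C ∪ S)).edgeSet =
      ∑ v ∈ C.erase P.root, f (P.edge v) + ∑ v ∈ S, f (P.edge v) := by
    intro S hS
    rw [edgeLabelSum_subtree f (hclosed S hS), erase_union_distrib,
      erase_eq_of_notMem fun h => hLr _ (hS h) rfl, sum_union]
    exact disjoint_of_subset_left (erase_subset _ _) (hCL.mono_right hS)
  have htree : ∀ S ⊆ L, (P.subtree (C ∪ S)).coe.IsTree := fun S hS =>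
    isTree_subtree (mem_union_left _ hr) (hclosed S hS)
  have hsign : ∀ v ∈ L, f (P.edge v) = 1 ∨ f (P.edge v) = -1 := fun v hv =>
    hf _ (P.adj_parent v (hLr v hv))
  set Lpos := L.filter fun v => f (P.edge v) = 1
  set Lneg := L.filter fun v => ¬ f (P.edge v) = 1
  have hpos : ∑ v ∈ Lpos, f (P.edge v) = #Lpos := by
    rw [sum_congr rfl fun v hv => (mem_filter.1 hv).2, sum_const, nsmul_one]
  have hneg : ∑ v ∈ Lneg, f (P.edge v) = -#Lneg := by
    rw [sum_congr rfl fun v hv => (hsign v (mem_filter.1 hv).1).resolve_left (mem_filter.1 hv).2,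
      sum_const, smul_neg, nsmul_one]
  have hcard : #Lpos + #Lneg = #L := card_filter_add_card_filter_not _
  set A := ∑ v ∈ C.erase P.root, f (P.edge v)
  by_cases hA : (#L : ℤ) ≤ 2 * |A + #Lpos|
  · refine ⟨_, htree Lpos (filter_subset _ _), ?_⟩
    rwa [hsum Lpos (filter_subset _ _), hpos]
  · refine ⟨_, htree Lneg (filter_subset _ _), ?_⟩
    rw [hsum Lneg (filter_subset _ _), hneg]
    have := le_abs_self (A + #Lpos)
    have := neg_abs_le (A + -#Lneg)
    push_cast [← hcard] at hA ⊢
    linarith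

end ParentMap

end SimpleGraph

variable {k l : ℕ}

def gridParentMap (hk : 0 < k) (hl : 0 < l) : (pathGraph k □ pathGraph l).ParentMap where
  root := (⟨0, hk⟩, ⟨0, hl⟩)
  parent v :=
    if v.2.val ≠ 0 ∧ Even v.1.val then (v.1, ⟨v.2 - 1, by omega⟩) else (⟨v.1 - 1, by omega⟩, v.2)
  depth v := v.1 + v.2
  adj_parent := by
    rintro ⟨i, j⟩ hv
    simp only [ne_eq, Prod.mk.injEq, Fin.ext_iff] at hv
    dsimp only
    split_ifs with h
    · simp only [boxProd_adj_right, pathGraph_adj]; omega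
    · have : (i : ℕ) ≠ 0 := by rintro h0; simp_all
      simp only [boxProd_adj_left, pathGraph_adj]; omega
  depth_parent_lt := by
    rintro ⟨i, j⟩ hv
    simp only [ne_eq, Prod.mk.injEq, Fin.ext_iff] at hv
    dsimp only
    split_ifs with h
    · dsimp only; omega
    · have : (i : ℕ) ≠ 0 := by rintro h0; simp_all
      dsimp only; omega

def gridComb (k l : ℕ) : Finset (Fin k × Fin l) := {v | v.2.val = 0 ∨ Even v.1.val}

def gridPendants (k l : ℕ) : Finset (Fin k × Fin l) := {v | Odd v.1.val ∧ v.2.val ≠ 0}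

lemma disjoint_gridComb_gridPendants : Disjoint (gridComb k l) (gridPendants k l) := by
  simp only [gridComb, gridPendants, disjoint_filter, ← Nat.not_even_iff_odd]
  tauto

lemma card_filter_odd_range (n : ℕ) : #{i ∈ range n | Odd i} = n / 2 := by
  induction n with
  | zero => rfl
  | succ n ih =>
    rw [range_add_one, filter_insert]
    split_ifs with h
    · rw [card_insert_of_notMem (by simp), ih]
      obtain ⟨m, rfl⟩ := h
      omega
    · rw [ih]
      obtain ⟨m, rfl⟩ := Nat.not_odd_iff_even.1 h
      omega

lemma card_filter_fin_val (n : ℕ) (p : ℕ → Prop) [DecidablePred p] :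
    #{i : Fin n | p i} = #{i ∈ range n | p i} := by
  rw [← card_map Fin.valEmbedding]
  congr 1
  ext i
  simp [Fin.exists_iff, and_comm]

lemma card_gridPendants : #(gridPendants k l) = k / 2 * (l - 1) := by
  rw [gridPendants, ← univ_product_univ, filter_product (p := fun i : Fin k => Odd i.val)
    (q := fun j : Fin l => j.val ≠ 0), card_product, card_filter_fin_val k Odd,
    card_filter_fin_val l (· ≠ 0), card_filter_odd_range, filter_ne', card_erase_eq_ite, card_range]
  split_ifs with hl
  · rfl
  · rw [mem_range, not_lt, Nat.le_zero] at hl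
    simp [hl]

lemma gridParentMap_parent_mem_gridComb (hk : 0 < k) (hl : 0 < l) (v : Fin k × Fin l) :
    (gridParentMap hk hl).parent v ∈ gridComb k l := by
  obtain ⟨i, j⟩ := v
  simp only [gridParentMap, gridComb, mem_filter_univ]
  split_ifs with h
  · exact Or.inr h.2
  · rw [not_and_or, not_not, Nat.not_even_iff_odd] at h
    rcases h with h | h
    · exact Or.inl h
    · exact Or.inr (Nat.Odd.sub_odd h odd_one)

lemma sub_max_sub_min_lt_half_card_gridPendants (hk : 0 < k) (hl : 0 < l) :
    (k : ℝ) * l / 8 - (max k l : ℝ) / 8 - (min k l : ℝ) < (#(gridPendants k l) : ℝ) / 2 := by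
  have hhalf : (k : ℝ) ≤ 2 * ((k / 2 : ℕ) : ℝ) + 1 := by
    exact_mod_cast (by omega : k ≤ 2 * (k / 2) + 1)
  have hl' : (1 : ℝ) ≤ l := by exact_mod_cast hl
  have hk' : (1 : ℝ) ≤ k := by exact_mod_cast hk
  have hmax : (max k l : ℝ) ≤ k * l :=
    max_le (le_mul_of_one_le_right (by positivity) hl') (le_mul_of_one_le_left (by positivity) hk')
  have hprod := mul_le_mul_of_nonneg_right hhalf (sub_nonneg.2 hl')
  rw [card_gridPendants, Nat.cast_mul, Nat.cast_sub hl, Nat.cast_one]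
  linarith [min_add_max (k : ℝ) l, le_min (Nat.cast_nonneg k : (0 : ℝ) ≤ k) (Nat.cast_nonneg l)]

/-- For positive integers `k, ℓ`, the (not necessarily spanning) tree
discrepancy of the grid `Pₖ □ Pₗ` is greater than `kℓ/8 − max{k,ℓ}/8 − min{k,ℓ}`: for every
`±1`-labeling `f` of the edges there is a subgraph `H` which is a tree with
`|f(H)| > kℓ/8 − max{k,ℓ}/8 − min{k,ℓ}`. -/
theorem grid_tree_discrepancy (k l : ℕ) (hk : 0 < k) (hl : 0 < l)
    (f : Sym2 (Fin k × Fin l) → ℤ)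
    (hf : ∀ e ∈ (pathGraph k □ pathGraph l).edgeSet, f e = 1 ∨ f e = -1) :
    ∃ H : (pathGraph k □ pathGraph l).Subgraph, H.coe.IsTree ∧
      (k : ℝ) * l / 8 - (max k l : ℝ) / 8 - (min k l : ℝ) <
        |((edgeLabelSum f H.edgeSet : ℤ) : ℝ)| := by
  have hroot : (gridParentMap hk hl).root ∈ gridComb k l := by simp [gridParentMap, gridComb]
  obtain ⟨H, hH, hcard⟩ :=
    (gridParentMap hk hl).exists_isTree_card_le_two_mul_abs_edgeLabelSum hroot
      (fun v _ _ => gridParentMap_parent_mem_gridComb hk hl v)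
      (fun v _ => gridParentMap_parent_mem_gridComb hk hl v) disjoint_gridComb_gridPendants f hf
  refine ⟨H, hH, (sub_max_sub_min_lt_half_card_gridPendants hk hl).trans_le ?_⟩
  rw [div_le_iff₀' two_pos]
  exact_mod_cast hcard
end

section
/- For every k ≥ 2, the spanning tree discrepancy of the k × k grid graph satisfies 𝒟(Pₖ □ Pₖ, 𝒯ₙ) ≤ k − 1, where n = k²; that is, there exists a labeling f : E(Pₖ □ Pₖ) → {−1, +1} (label +1 the edges in the upper half of the grid and −1 those in the lower half) such that every spanning tree T of Pₖ □ Pₖ satisfies |f(T)| ≤ k − 1. -/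
/-!
Order the vertices as `0, …, n - 1` so that adjacent vertices are at most `d` apart (the grid,
read row by row, has `d = k`), let `N = (n + d) / 2`, and label `+1` exactly the edges with both
ends among the first `N` vertices. In a spanning tree the `+1` edges form a forest on those `N`
vertices, so there are fewer than `N` of them. A `−1` edge has an end at position `≥ N`, hence
both ends at positions `≥ N − d`, so the `−1` edges form a forest on the last `n − N + d = N`
vertices. As the two counts add up to `n − 1`, their difference is at most `2N − 1 − n = d − 1` in
absolute value.
-/

open SimpleGraph Finset

lemma edgeLabelSum_edgeSet {V : Type*} [Fintype V] [DecidableEq V] (f : Sym2 V → ℤ)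
    (G : SimpleGraph V) [DecidableRel G.Adj] :
    edgeLabelSum f G.edgeSet = ∑ e ∈ G.edgeFinset, f e := by
  rw [edgeLabelSum, ← coe_edgeFinset, sum_indicator_subset f (subset_univ _)]

namespace SimpleGraph

variable {V : Type*} [Fintype V] {G : SimpleGraph V}

lemma IsAcyclic.card_edgeFinset_add_one_le [Nonempty V] [Fintype G.edgeSet]
    (hG : G.IsAcyclic) : #G.edgeFinset + 1 ≤ Fintype.card V := by
  classical
  obtain ⟨T, hGT, -, hT⟩ := connected_top.exists_isTree_le_of_le_of_isAcyclic le_top hG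
  rw [← hT.card_edgeFinset]
  gcongr

lemma IsAcyclic.card_edgeFinset_inter_sym2_lt [DecidableEq V] [DecidableRel G.Adj]
    (hG : G.IsAcyclic) {s : Finset V} (hs : s.Nonempty) : #(G.edgeFinset ∩ s.sym2) < #s := by
  rw [← filter_edgeFinset_toFinset_subset, card_filter_edgeFinset_toFinset_subset]
  have : Nonempty (s : Set V) := hs.to_subtype
  simpa using (hG.induce s).card_edgeFinset_add_one_le

lemma IsTree.abs_edgeLabelSum_le [DecidableEq V]
    {T : SimpleGraph V} [DecidableRel T.Adj] (hT : T.IsTree) {s t : Finset V}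
    (hs : s.Nonempty) (ht : t.Nonempty) (hst : ∀ e ∈ T.edgeSet, e ∉ s.sym2 → e ∈ t.sym2)
    {m : ℤ} (hsm : 2 * #s ≤ Fintype.card V + m + 1) (htm : 2 * #t ≤ Fintype.card V + m + 1) :
    |edgeLabelSum (fun e ↦ if e ∈ s.sym2 then 1 else -1) T.edgeSet| ≤ m := by
  have hplus := hT.isAcyclic.card_edgeFinset_inter_sym2_lt hs
  have hminus : #{e ∈ T.edgeFinset | e ∉ s.sym2} < #t := by
    refine (card_le_card fun e he ↦ ?_).trans_lt (hT.isAcyclic.card_edgeFinset_inter_sym2_lt ht)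
    rw [mem_filter, mem_edgeFinset] at he
    exact mem_inter.2 ⟨mem_edgeFinset.2 he.1, hst e he.1 he.2⟩
  have hsplit := card_filter_add_card_filter_not (s := T.edgeFinset) (· ∈ s.sym2)
  rw [filter_mem_eq_inter] at hsplit
  have hcard := hT.card_edgeFinset
  rw [edgeLabelSum_edgeSet, sum_ite, sum_const, sum_const, filter_mem_eq_inter, abs_le]
  simp only [nsmul_eq_mul, mul_one, mul_neg_one]
  omega

end SimpleGraph

section Bandwidth

variable {V : Type*} [Fintype V] {n : ℕ} (pos : V ≃ Fin n)

lemma card_filter_equiv_fin_lt (N : ℕ) : #{v | (pos v : ℕ) < N} = min n N := by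
  rw [card_equiv pos (t := {i : Fin n | (i : ℕ) < N}) (by simp), Fin.card_filter_val_lt]

lemma card_filter_le_equiv_fin (M : ℕ) : #{v | M ≤ (pos v : ℕ)} = n - min n M := by
  have hsplit := card_filter_add_card_filter_not (s := univ) (fun v ↦ (pos v : ℕ) < M)
  simp only [not_lt, card_univ, Fintype.card_congr pos, Fintype.card_fin,
    card_filter_equiv_fin_lt] at hsplit
  omega

theorem exists_spanningTree_discrepancy_le_of_bandwidth_le [DecidableEq V] (G : SimpleGraph V)
    {d : ℕ} (hpos : ∀ x y, G.Adj x y → (pos x : ℕ) ≤ pos y + d) (hnd : Even (n + d)) :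
    ∃ f : Sym2 V → ℤ, (∀ e ∈ G.edgeSet, f e = 1 ∨ f e = -1) ∧
      ∀ T : SimpleGraph V, T ≤ G → T.IsTree → |edgeLabelSum f T.edgeSet| ≤ (d : ℤ) - 1 := by
  classical
  set N := (n + d) / 2
  set s : Finset V := {v | (pos v : ℕ) < N}
  set t : Finset V := {v | N - d ≤ (pos v : ℕ)}
  refine ⟨fun e ↦ if e ∈ s.sym2 then 1 else -1, fun e _ ↦ by dsimp only; split_ifs <;> simp,
    fun T hTG hT ↦ ?_⟩
  have hn : 0 < n := by
    have := hT.connected.nonempty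
    simpa [Fintype.card_congr pos] using Fintype.card_pos (α := V)
  obtain ⟨r, hr⟩ := hnd
  have hs : s.Nonempty := ⟨pos.symm ⟨0, hn⟩, by simp [s]; omega⟩
  have ht : t.Nonempty := ⟨pos.symm ⟨n - 1, by omega⟩, by simp [t]; omega⟩
  refine hT.abs_edgeLabelSum_le hs ht ?_ ?_ ?_
  · intro e he hes
    induction e with
    | h x y =>
      have hxy := hpos x y (hTG he)
      have hyx := hpos y x (hTG he).symm
      simp only [mk_mem_sym2_iff, mem_filter, mem_univ, true_and, s, t] at hes ⊢
      omega
  · rw [card_filter_equiv_fin_lt, Fintype.card_congr pos, Fintype.card_fin]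
    omega
  · rw [card_filter_le_equiv_fin, Fintype.card_congr pos, Fintype.card_fin]
    omega

end Bandwidth

lemma finProdFinEquiv_le_add_of_adj_boxProd_pathGraph {k : ℕ} {x y : Fin k × Fin k}
    (h : (pathGraph k □ pathGraph k).Adj x y) :
    (finProdFinEquiv x : ℕ) ≤ finProdFinEquiv y + k := by
  simp only [finProdFinEquiv_apply_val]
  rcases boxProd_adj.1 h with ⟨hrow, hcol⟩ | ⟨hcol, hrow⟩
  · have : (x.1 : ℕ) ≤ y.1 + 1 := by rw [pathGraph_adj] at hrow; omega
    rw [hcol]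
    nlinarith
  · have : (x.2 : ℕ) ≤ y.2 + 1 := by rw [pathGraph_adj] at hcol; omega
    rw [hrow]
    have := y.2.pos
    omega

theorem grid_spanning_tree_discrepancy_upper_general (k : ℕ) :
    ∃ f : Sym2 (Fin k × Fin k) → ℤ,
      (∀ e ∈ (pathGraph k □ pathGraph k).edgeSet, f e = 1 ∨ f e = -1) ∧
      ∀ T : SimpleGraph (Fin k × Fin k), T ≤ (pathGraph k □ pathGraph k) → T.IsTree →
        |edgeLabelSum f T.edgeSet| ≤ (k : ℤ) - 1 :=
  exists_spanningTree_discrepancy_le_of_bandwidth_le finProdFinEquiv _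
    (fun _ _ ↦ finProdFinEquiv_le_add_of_adj_boxProd_pathGraph)
    (by simpa [← mul_add_one] using Nat.even_mul_succ_self k)

/-- For every `k ≥ 2`, the spanning-tree discrepancy of the `k × k` grid
`Pₖ □ Pₖ` is at most `k − 1`: there is a `±1`-labeling `f` of its edges such that every
spanning tree `T` satisfies `|f(T)| ≤ k − 1`. -/
theorem grid_spanning_tree_discrepancy_upper (k : ℕ) (hk : 2 ≤ k) :
    ∃ f : Sym2 (Fin k × Fin k) → ℤ,
      (∀ e ∈ (pathGraph k □ pathGraph k).edgeSet, f e = 1 ∨ f e = -1) ∧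
      ∀ T : SimpleGraph (Fin k × Fin k), T ≤ (pathGraph k □ pathGraph k) → T.IsTree →
        |edgeLabelSum f T.edgeSet| ≤ (k : ℤ) - 1 :=
  grid_spanning_tree_discrepancy_upper_general k
end

section
/- For every k ≥ 1, the path discrepancy of the graph Pₖ □ P₂ (the 2 × k grid) satisfies 𝒟(Pₖ □ P₂, 𝒫) ≥ k/2; that is, for every labeling f : E(Pₖ □ P₂) → {−1, +1} there exists a path P in Pₖ □ P₂ with |f(P)| ≥ k/2. -/
/-!
For a set `C` of columns of the ladder `Pₖ □ P₂`, run two snakes from the left end, one in each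
row, along the rails, each switching rows exactly at the rungs in `C`. Together they use every
rail once and every rung in `C` twice. Taking for `C` the rungs labelled `+1` and then the
complementary set, the four snake sums satisfy `S₁ + S₂ - S₃ - S₄ = 2k`, so one of them has
absolute value at least `k / 2`.
-/

open SimpleGraph Finset

lemma Fin.Ici_castSucc_eq_cons_Ici_succ {n : ℕ} (i : Fin n) :
    Ici i.castSucc = Finset.cons i.castSucc (Ici i.succ) (by simp) := by
  ext j
  simp only [mem_Ici, mem_cons, Fin.le_iff_val_le_val, Fin.ext_iff, Fin.val_castSucc, Fin.val_succ]
  omega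

lemma Fin.Ici_last (n : ℕ) : Ici (Fin.last n) = {Fin.last n} := Ici_top

lemma Finset.sum_ite_eq_one_sub_sum_ite_ne_one {ι : Type*} (s : Finset ι) (g : ι → ℤ)
    (hg : ∀ j ∈ s, g j = 1 ∨ g j = -1) :
    ∑ j ∈ s, (if g j = 1 then g j else 0) - ∑ j ∈ s, (if ¬ g j = 1 then g j else 0) = #s := by
  rw [← sum_sub_distrib, card_eq_sum_ones, Nat.cast_sum]
  refine sum_congr rfl fun j hj => ?_
  rcases hg j hj with h | h <;> simp [h]

lemma exists_le_abs_of_sum_sub_sum {ι K : Type*} [Fintype ι] [Nonempty ι] [Field K]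
    [LinearOrder K] [IsStrictOrderedRing K] (x y : ι → K) :
    ∃ i, (∑ i, x i - ∑ i, y i) / (2 * Fintype.card ι) ≤ |x i| ∨
      (∑ i, x i - ∑ i, y i) / (2 * Fintype.card ι) ≤ |y i| := by
  by_contra! h
  set t := (∑ i, x i - ∑ i, y i) / (2 * Fintype.card ι)
  have : ∑ i, x i - ∑ i, y i < ∑ i, x i - ∑ i, y i := calc
    _ ≤ ∑ i, |x i| + ∑ i, |y i| := by
        rw [sub_eq_add_neg, ← sum_neg_distrib]
        gcongr with i <;> simp [le_abs_self, neg_le_abs]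
    _ < ∑ _i : ι, t + ∑ _i : ι, t :=
        add_lt_add (sum_lt_sum_of_nonempty univ_nonempty fun i _ => (h i).1)
          (sum_lt_sum_of_nonempty univ_nonempty fun i _ => (h i).2)
    _ = _ := by
        simp only [sum_const, card_univ, nsmul_eq_mul, t]
        field_simp
        ring
  exact lt_irrefl _ this

namespace SimpleGraph

section weight

variable {V : Type*} {G : SimpleGraph V} (f : Sym2 V → ℤ)

def Walk.weight {u v : V} (p : G.Walk u v) : ℤ := (p.edges.map f).sum

@[simp] lemma Walk.weight_nil {u : V} : (nil : G.Walk u u).weight f = 0 := rfl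

@[simp] lemma Walk.weight_cons {u v w : V} (h : G.Adj u v) (p : G.Walk v w) :
    (cons h p).weight f = f s(u, v) + p.weight f := rfl

end weight

abbrev ladderGraph (n : ℕ) : SimpleGraph (Fin (n + 1) × Fin 2) := pathGraph (n + 1) □ pathGraph 2

variable {n : ℕ}

def ladderRung (j : Fin (n + 1)) : Sym2 (Fin (n + 1) × Fin 2) := s((j, 0), (j, 1))

def ladderRail (j : Fin n) (b : Fin 2) : Sym2 (Fin (n + 1) × Fin 2) :=
  s((j.castSucc, b), (j.succ, b))

lemma ladderGraph_adj_rung (j : Fin (n + 1)) (b : Fin 2) :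
    (ladderGraph n).Adj (j, b) (j, b.rev) :=
  boxProd_adj.2 <| .inr ⟨by fin_cases b <;> simp [pathGraph_adj], rfl⟩

lemma ladderGraph_adj_rail (j : Fin n) (b : Fin 2) :
    (ladderGraph n).Adj (j.castSucc, b) (j.succ, b) :=
  boxProd_adj.2 <| .inl ⟨by simp [pathGraph_adj], rfl⟩

lemma ladderRung_mem_edgeSet (j : Fin (n + 1)) : ladderRung j ∈ (ladderGraph n).edgeSet :=
  ladderGraph_adj_rung j 0

lemma sym2_eq_ladderRung (j : Fin (n + 1)) (b : Fin 2) : s((j, b), (j, b.rev)) = ladderRung j := by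
  fin_cases b
  · rfl
  · exact Sym2.eq_swap

lemma ladderRail_cons_isPath {i : Fin n} {b : Fin 2} {w : Fin (n + 1) × Fin 2}
    {q : (ladderGraph n).Walk (i.succ, b) w} (hq : q.IsPath ∧ ∀ x ∈ q.support, i.succ ≤ x.1) :
    (Walk.cons (ladderGraph_adj_rail i b) q).IsPath ∧
      ∀ x ∈ (Walk.cons (ladderGraph_adj_rail i b) q).support, i.castSucc ≤ x.1 := by
  have hlt : ∀ x ∈ q.support, i.castSucc < x.1 := fun x hx =>
    Fin.castSucc_lt_succ.trans_le (hq.2 x hx)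
  refine ⟨hq.1.cons fun h => (hlt _ h).ne rfl, ?_⟩
  simp only [Walk.support_cons, List.mem_cons]
  rintro x (rfl | hx)
  · exact le_rfl
  · exact (hlt x hx).le

lemma ladderRung_cons_ladderRail_cons_isPath {i : Fin n} {b : Fin 2} {w : Fin (n + 1) × Fin 2}
    {q : (ladderGraph n).Walk (i.succ, b.rev) w}
    (hq : q.IsPath ∧ ∀ x ∈ q.support, i.succ ≤ x.1) :
    (Walk.cons (ladderGraph_adj_rung _ b) (.cons (ladderGraph_adj_rail i b.rev) q)).IsPath ∧
      ∀ x ∈ (Walk.cons (ladderGraph_adj_rung _ b) (.cons (ladderGraph_adj_rail i b.rev) q)).support,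
        i.castSucc ≤ x.1 := by
  obtain ⟨hpath, hcol⟩ := ladderRail_cons_isPath hq
  refine ⟨hpath.cons ?_, ?_⟩
  · rw [Walk.support_cons, List.mem_cons, not_or]
    exact ⟨by fin_cases b <;> simp,
      fun h => (Fin.castSucc_lt_succ.trans_le (hq.2 _ h)).ne rfl⟩
  · rw [Walk.support_cons]
    rintro x (_ | ⟨_, hx⟩)
    · exact le_rfl
    · exact hcol x hx

def HasLadderSnakePair (f : Sym2 (Fin (n + 1) × Fin 2) → ℤ) (c : Fin (n + 1) → Prop)
    [DecidablePred c] (m : Fin (n + 1)) : Prop :=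
  ∃ (e : Fin 2 → Fin (n + 1) × Fin 2) (p : ∀ b, (ladderGraph n).Walk (m, b) (e b)),
    (∀ b, (p b).IsPath ∧ ∀ x ∈ (p b).support, m ≤ x.1) ∧
    ∑ b, (p b).weight f =
      2 * ∑ j ≥ m, (if c j then f (ladderRung j) else 0) +
        ∑ j : Fin n with m ≤ j.castSucc, ∑ b, f (ladderRail j b)

variable (f : Sym2 (Fin (n + 1) × Fin 2) → ℤ) (c : Fin (n + 1) → Prop) [DecidablePred c]

lemma hasLadderSnakePair_last : HasLadderSnakePair f c (Fin.last n) := by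
  have hrails : ∀ j : Fin n, ¬ Fin.last n ≤ j.castSucc := fun j =>
    not_le.2 (Fin.castSucc_lt_last j)
  by_cases hc : c (Fin.last n)
  · refine ⟨fun b => (Fin.last n, b.rev), fun b => .cons (ladderGraph_adj_rung _ b) .nil,
      fun b => ⟨.cons .nil (by fin_cases b <;> simp), by simp⟩, ?_⟩
    simp [sym2_eq_ladderRung, hc, hrails, Fin.Ici_last]
  · refine ⟨fun b => (Fin.last n, b), fun b => .nil, fun b => ⟨.nil, by simp⟩, ?_⟩
    simp [hc, hrails, Fin.Ici_last]

lemma HasLadderSnakePair.castSucc {i : Fin n} (h : HasLadderSnakePair f c i.succ) :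
    HasLadderSnakePair f c i.castSucc := by
  obtain ⟨e, p, hp, hsum⟩ := h
  have hrails : ∑ j : Fin n with i.castSucc ≤ j.castSucc, ∑ b, f (ladderRail j b) =
      ∑ b, f (ladderRail i b) + ∑ j : Fin n with i.succ ≤ j.castSucc, ∑ b, f (ladderRail j b) := by
    simp only [Fin.castSucc_le_castSucc_iff, Fin.succ_le_castSucc_iff, filter_le_eq_Ici,
      filter_lt_eq_Ioi, ← sum_Ioi_add_eq_sum_Ici, add_comm]
  have hstep : ∑ b, (f (ladderRail i b) + (p b).weight f) =
      2 * ∑ j ≥ i.succ, (if c j then f (ladderRung j) else 0) +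
        ∑ j : Fin n with i.castSucc ≤ j.castSucc, ∑ b, f (ladderRail j b) := by
    rw [sum_add_distrib, hsum, hrails]
    ring
  unfold HasLadderSnakePair
  rw [Fin.Ici_castSucc_eq_cons_Ici_succ, sum_cons]
  by_cases hc : c i.castSucc
  · refine ⟨fun b => e b.rev, fun b => .cons (ladderGraph_adj_rung _ b)
      (.cons (ladderGraph_adj_rail i b.rev) (p b.rev)),
      fun b => ladderRung_cons_ladderRail_cons_isPath (hp b.rev), ?_⟩
    calc _ = ∑ b : Fin 2, (f (ladderRung i.castSucc) +
              (f (ladderRail i b.rev) + (p b.rev).weight f)) := by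
            simp only [Walk.weight_cons, sym2_eq_ladderRung]
            rfl
        _ = 2 * f (ladderRung i.castSucc) + ∑ b, (f (ladderRail i b) + (p b).weight f) := by
            rw [sum_add_distrib, Fintype.sum_equiv Fin.revPerm
              (fun b => f (ladderRail i b.rev) + (p b.rev).weight f)
              (fun b => f (ladderRail i b) + (p b).weight f) fun _ => rfl]
            simp
        _ = _ := by
            rw [hstep, if_pos hc]
            ring
  · refine ⟨e, fun b => .cons (ladderGraph_adj_rail i b) (p b),
      fun b => ladderRail_cons_isPath (hp b), ?_⟩
    rw [if_neg hc, zero_add, ← hstep]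
    rfl

theorem hasLadderSnakePair (m : Fin (n + 1)) : HasLadderSnakePair f c m := by
  induction m using Fin.reverseInduction with
  | last => exact hasLadderSnakePair_last f c
  | cast i ih => exact ih.castSucc

end SimpleGraph

/-- For every `k ≥ 1`, the path discrepancy of the `2 × k` grid `Pₖ □ P₂`
is at least `k/2`: for every `±1`-labeling `f` of its edges there is a path `P` with
`|f(P)| ≥ k/2`. -/
theorem two_by_k_grid_path_discrepancy (k : ℕ) (hk : 1 ≤ k)
    (f : Sym2 (Fin k × Fin 2) → ℤ)
    (hf : ∀ e ∈ (pathGraph k □ pathGraph 2).edgeSet, f e = 1 ∨ f e = -1) :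
    ∃ (u v : Fin k × Fin 2) (p : (pathGraph k □ pathGraph 2).Walk u v), p.IsPath ∧
      (k : ℝ) / 2 ≤ |(((p.edges.map f).sum : ℤ) : ℝ)| := by
  obtain ⟨n, rfl⟩ : ∃ n, k = n + 1 := ⟨k - 1, by omega⟩
  obtain ⟨e, p, hp, hsum⟩ := hasLadderSnakePair f (fun j => f (ladderRung j) = 1) 0
  obtain ⟨e', p', hp', hsum'⟩ := hasLadderSnakePair f (fun j => ¬ f (ladderRung j) = 1) 0
  have hdiff : ∑ b, (p b).weight f - ∑ b, (p' b).weight f = 2 * (n + 1 : ℤ) := by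
    rw [hsum, hsum', add_sub_add_right_eq_sub, ← mul_sub,
      sum_ite_eq_one_sub_sum_ite_ne_one _ _ fun j _ => hf _ (ladderRung_mem_edgeSet j)]
    simp
  have hbound : (∑ b, ((p b).weight f : ℝ) - ∑ b, ((p' b).weight f : ℝ)) /
      (2 * Fintype.card (Fin 2)) = ((n + 1 : ℕ) : ℝ) / 2 := by
    rw [← Int.cast_sum, ← Int.cast_sum, ← Int.cast_sub, hdiff, Fintype.card_fin]
    push_cast
    ring
  obtain ⟨b, hb | hb⟩ := exists_le_abs_of_sum_sub_sum (fun b => ((p b).weight f : ℝ))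
    (fun b => ((p' b).weight f : ℝ))
  · exact ⟨_, _, p b, (hp b).1, hbound ▸ hb⟩
  · exact ⟨_, _, p' b, (hp' b).1, hbound ▸ hb⟩
end
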